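/- The M-Wright function of order 1/2 satisfies M_{1/2}(z) = (1/√π) exp(-z²/4) for all z ∈ ℂ, where M_β(z) := ∑_{n=0}^∞ (-z)ⁿ / (n! Γ(-βn + 1 - β)). -/

import Mathlib

open Complex

/-- The M-Wright function of order `β`, defined by its power series; reciprocals of the
Gamma function at its poles are `0` since `Complex.Gamma` vanishes at nonpositive integers. -/
noncomputable def mWright (β : ℝ) (z : ℂ) : ℂ :=
  ∑' n : ℕ, (-z) ^ n / ((n.factorial : ℂ) * Complex.Gamma (-(β : ℂ) * n + 1 - (β : ℂ)))

lemma gamma_half_val : Complex.Gamma (1/2) = (Real.sqrt Real.pi : ℂ) := by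
  rw [Complex.Gamma_one_half_eq, Real.sqrt_eq_rpow,
    Complex.ofReal_cpow Real.pi_pos.le]
  norm_num

lemma gamma_half_sub (k : ℕ) :
    Complex.Gamma (1/2 - k) =
      ((-4 : ℂ)) ^ k * (k.factorial : ℂ) * (Real.sqrt Real.pi : ℂ) / ((2*k).factorial : ℂ) := by
  induction k with
  | zero => simpa using gamma_half_val
  | succ k ih =>
    have hs : ((1:ℂ)/2 - ((k:ℂ)+1)) ≠ 0 := by
      intro h
      have := congrArg Complex.re h
      push_cast at this
      simp at this
      linarith
    have hrec := Complex.Gamma_add_one ((1:ℂ)/2 - ((k:ℂ)+1)) hs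
    rw [show (1/2 - ((k:ℂ)+1)) + 1 = 1/2 - k by ring] at hrec
    have hG : Complex.Gamma (1/2 - ((k:ℂ)+1)) = Complex.Gamma (1/2 - (k:ℂ)) / (1/2 - ((k:ℂ)+1)) := by
      rw [hrec, mul_div_cancel_left₀ _ hs]
    have hfac : ((2*(k+1)).factorial : ℂ) = ((2:ℂ)*k+2) * (2*(k:ℂ)+1) * ((2*k).factorial : ℂ) := by
      have h : 2*(k+1) = (2*k+1) + 1 := by ring
      rw [h, Nat.factorial_succ, Nat.factorial_succ]
      push_cast
      ring
    have hfk : (((k+1).factorial : ℂ)) = ((k:ℂ)+1) * (k.factorial : ℂ) := by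
      rw [Nat.factorial_succ]; push_cast; ring
    have h2k : ((2*k).factorial : ℂ) ≠ 0 := by
      exact_mod_cast Nat.cast_ne_zero.mpr (2*k).factorial_ne_zero
    have h1 : ((2:ℂ)*k+2) ≠ 0 := by
      intro h
      have := congrArg Complex.re h
      push_cast at this
      simp at this
      linarith
    have h2 : ((2:ℂ)*k+1) ≠ 0 := by
      intro h
      have := congrArg Complex.re h
      push_cast at this
      simp at this
      linarith
    have hA : ((2*k).factorial : ℂ) * (1/2 - ((k:ℂ)+1)) ≠ 0 := mul_ne_zero h2k hs
    have hB : ((2:ℂ)*k+2) * (2*(k:ℂ)+1) * ((2*k).factorial : ℂ) ≠ 0 :=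
      mul_ne_zero (mul_ne_zero h1 h2) h2k
    push_cast
    rw [hG, ih, hfac, hfk, div_div, div_eq_div_iff hA hB]
    ring

theorem mWright_half (z : ℂ) :
    mWright (1/2) z = (1 / (Real.sqrt Real.pi : ℂ)) * Complex.exp (-z ^ 2 / 4) := by
  have hπ : (Real.sqrt Real.pi : ℂ) ≠ 0 := by
    exact_mod_cast Real.sqrt_ne_zero'.mpr Real.pi_pos
  unfold mWright
  have hcast : (((1:ℝ)/2 : ℝ) : ℂ) = 1/2 := by norm_num
  simp only [hcast]
  set f : ℕ → ℂ := fun n =>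
    (-z) ^ n / ((n.factorial : ℂ) * Complex.Gamma (-(1/2 : ℂ) * n + 1 - (1/2 : ℂ))) with hf
  have hodd : ∀ k : ℕ, f (2*k+1) = 0 := by
    intro k
    have harg : (-(1/2 : ℂ) * ((2*k+1 : ℕ) : ℂ) + 1 - (1/2 : ℂ)) = -(k : ℂ) := by
      push_cast; ring
    rw [hf]
    simp only [harg, Complex.Gamma_neg_nat_eq_zero, mul_zero, div_zero]
  have hinj : Function.Injective (fun k : ℕ => 2*k) := by
    intro a b h
    dsimp only at h
    omega
  have hsupp : Function.support f ⊆ Set.range (fun k : ℕ => 2*k) := by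
    intro n hn
    rcases Nat.even_or_odd n with ⟨k, hk⟩ | ⟨k, hk⟩
    · exact ⟨k, by dsimp only; omega⟩
    · exfalso; apply hn; rw [hk]; exact hodd k
  rw [← hinj.tsum_eq hsupp]
  have heven : ∀ k : ℕ, f (2*k) = (1 / (Real.sqrt Real.pi : ℂ)) * ((-z^2/4) ^ k / k.factorial) := by
    intro k
    have harg : (-(1/2 : ℂ) * ((2*k : ℕ) : ℂ) + 1 - (1/2 : ℂ)) = 1/2 - k := by
      push_cast; ring
    rw [hf]
    simp only [harg, gamma_half_sub]
    have h2k : ((2*k).factorial : ℂ) ≠ 0 := by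
      exact_mod_cast Nat.cast_ne_zero.mpr (2*k).factorial_ne_zero
    have hkf : ((k.factorial : ℂ)) ≠ 0 := by
      exact_mod_cast Nat.cast_ne_zero.mpr k.factorial_ne_zero
    have h4 : ((-4:ℂ))^k ≠ 0 := pow_ne_zero _ (by norm_num)
    have hz : (-z)^(2*k) = z^(2*k) := by
      rw [neg_pow]
      simp [pow_mul]
    rw [hz]
    have key : (-z^2)^k * (-4:ℂ)^k = 4^k * (z^2)^k := by
      rw [← mul_pow, show ((-z^2) * (-4:ℂ)) = 4 * z^2 by ring, mul_pow]
    field_simp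
    have key2 : (-4:ℂ)^k * (-1/4:ℂ)^k = 1 := by
      rw [← mul_pow]; norm_num
    linear_combination (-(z^(2*k))) * key2
  simp only [heven]
  rw [tsum_mul_left]
  congr 1
  rw [Complex.exp_eq_exp_ℂ, NormedSpace.exp_eq_tsum_div]
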